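/- Let (V,∘) be a simple Novikov algebra and let R = ℂ[∂]V be the quadratic Lie conformal algebra corresponding to (V,∘) equipped with the trivial Lie bracket. Then for every nonzero ideal I of R one has ℂ[∂]∂V ⊆ I, i.e. I contains p(∂)∂v for every polynomial p and every v ∈ V. -/
import Mathlib


set_option maxSynthPendingDepth 3
set_option linter.unusedSectionVars false

namespace QLCA

variable {V : Type} [AddCommGroup V] [Module ℂ V]

/-- Bilinearity over `ℂ` of a binary product. -/
def IsBilin (f : V → V → V) : Prop :=
  (∀ x y z : V, f (x + y) z = f x z + f y z) ∧
  (∀ x y z : V, f x (y + z) = f x y + f x z) ∧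
  (∀ (c : ℂ) (x y : V), f (c • x) y = c • f x y) ∧
  (∀ (c : ℂ) (x y : V), f x (c • y) = c • f x y)

/-- `(V, f)` is a Novikov algebra over `ℂ`. -/
def IsNovikov (f : V → V → V) : Prop :=
  IsBilin f ∧
  (∀ a b c : V, f (f a b) c - f a (f b c) = f (f b a) c - f b (f a c)) ∧
  (∀ a b c : V, f (f a b) c = f (f a c) b)

/-- `I` is an ideal of the Novikov algebra `(V, f)`. -/
def IsNovikovIdeal (f : V → V → V) (I : Submodule ℂ V) : Prop :=
  ∀ a ∈ I, ∀ b : V, f a b ∈ I ∧ f b a ∈ I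

/-- The Novikov algebra `(V, f)` is simple. -/
def NovikovSimple (f : V → V → V) : Prop :=
  (∃ a b : V, f a b ≠ 0) ∧
  ∀ I : Submodule ℂ V, IsNovikovIdeal f I → I = ⊥ ∨ I = ⊤

/-- `(V, f)` is a Lie algebra over `ℂ`. -/
def IsLieBracket (f : V → V → V) : Prop :=
  IsBilin f ∧
  (∀ a b : V, f a b = - f b a) ∧
  (∀ a b c : V, f a (f b c) = f (f a b) c + f b (f a c))

/-- The Gel'fand-Dorfman compatibility condition between a Novikov product and
a Lie bracket. -/
def GDcompat (mul lie : V → V → V) : Prop :=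
  ∀ a b c : V,
    lie (mul a b) c - lie (mul a c) b + mul (lie a b) c - mul (lie a c) b
      - mul a (lie b c) = 0

/-- `(V, mul, lie)` is a Gel'fand-Dorfman bialgebra. -/
def IsGD (mul lie : V → V → V) : Prop :=
  IsNovikov mul ∧ IsLieBracket lie ∧ GDcompat mul lie

/-- `I` is a Gel'fand-Dorfman ideal of `(V, mul, lie)`. -/
def IsGDIdeal (mul lie : V → V → V) (I : Submodule ℂ V) : Prop :=
  IsNovikovIdeal mul I ∧ ∀ a ∈ I, ∀ b : V, lie a b ∈ I ∧ lie b a ∈ I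

/-- The symmetrized (Novikov-Jordan) product `a ∗ b = a∘b + b∘a`. -/
def sProd (mul : V → V → V) (a b : V) : V := mul a b + mul b a

/-- `I` is an ideal of the Novikov-Jordan algebra `(V, ∗)`. -/
def IsNJIdeal (mul : V → V → V) (I : Submodule ℂ V) : Prop :=
  ∀ a ∈ I, ∀ b : V, sProd mul a b ∈ I

/-- The Novikov-Jordan algebra `(V, ∗)` is simple. -/
def NJSimple (mul : V → V → V) : Prop :=
  (∃ a b : V, sProd mul a b ≠ 0) ∧
  ∀ I : Submodule ℂ V, IsNJIdeal mul I → I = ⊥ ∨ I = ⊤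

/-- An element of the free module `R = ℂ[∂]V`, recorded by its coefficients:
`a : Conf V` represents `∑ₘ ∂^m (a m)`. -/
abbrev Conf (V : Type) [Zero V] := ℕ →₀ V

/-- A polynomial in `λ` with coefficients in `R = ℂ[∂]V`: `P : LP V`
represents `∑ₙ λ^n (P n)`. -/
abbrev LP (V : Type) [Zero V] := ℕ →₀ (ℕ →₀ V)

/-- Multiplication by `∂` on `ℂ[∂]V`. -/
noncomputable def Dop (a : Conf V) : Conf V := Finsupp.mapDomain (· + 1) a

/-- Multiplication by `λ` on `λ`-polynomials. -/
noncomputable def lmul (P : LP V) : LP V := Finsupp.mapDomain (· + 1) P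

/-- Multiplication by `∂` on `λ`-polynomials. -/
noncomputable def dmul (P : LP V) : LP V := Finsupp.mapRange (Dop (V := V)) (by simp [Dop]) P

/-- Multiplication by `λ + ∂` on `λ`-polynomials. -/
noncomputable def ldOp (P : LP V) : LP V := lmul P + dmul P

/-- The `λ`-bracket on `R = ℂ[∂]V` obtained from the generator values `B u v`
(`u, v ∈ V`) by extension via `ℂ`-bilinearity and conformal sesquilinearity:
`[(∂^m u) λ (∂^n v)] = (-λ)^m (λ+∂)^n [u λ v]`. -/
noncomputable def qbr (B : V → V → LP V) (a b : Conf V) : LP V :=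
  Finsupp.sum a fun m am => Finsupp.sum b fun n bn =>
    ((-1 : ℂ) ^ m) • (lmul (V := V))^[m] ((ldOp (V := V))^[n] (B am bn))

/-- The substitution `λ ↦ -λ-∂` in a `λ`-polynomial
(used to express skew-symmetry `[a λ b] = -[b (-λ-∂) a]`). -/
noncomputable def nsubst (P : LP V) : LP V :=
  Finsupp.sum P fun n cn => ((-1 : ℂ) ^ n) • (ldOp (V := V))^[n] (Finsupp.single 0 cn)

/-- `I` is an ideal of `R = ℂ[∂]V` with `λ`-bracket `qbr B`: a
`ℂ[∂]`-submodule (a `ℂ`-submodule closed under `∂`) such that every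
`λ`-coefficient of `[a λ x]` lies in `I` for all `a ∈ R`, `x ∈ I`. -/
def IsConfIdeal (B : V → V → LP V) (I : Submodule ℂ (Conf V)) : Prop :=
  (∀ x ∈ I, Dop x ∈ I) ∧
  (∀ a : Conf V, ∀ x ∈ I, ∀ n : ℕ, qbr B a x n ∈ I)

/-- The conformal algebra `R = ℂ[∂]V` with `λ`-bracket `qbr B` is simple:
its `λ`-bracket is not identically zero and its only ideals are `0` and `R`. -/
def ConfSimple (B : V → V → LP V) : Prop :=
  (∃ a b : Conf V, qbr B a b ≠ 0) ∧
  ∀ I : Submodule ℂ (Conf V), IsConfIdeal B I → I = ⊥ ∨ I = ⊤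

/-- `R = ℂ[∂]V` with the `λ`-bracket `qbr B` is a Lie conformal algebra: the
bracket is `ℂ`-bilinear, satisfies conformal sesquilinearity, skew-symmetry
`[a λ b] = -[b (-λ-∂) a]`, and the Jacobi identity
`[a λ [b μ c]] = [[a λ b] (λ+μ) c] + [b μ [a λ c]]` (the latter written out by
comparing the coefficients of `λ^p μ^q` on both sides). -/
def IsLieConf (B : V → V → LP V) : Prop :=
  (∀ a b c : Conf V, qbr B (a + b) c = qbr B a c + qbr B b c) ∧
  (∀ a b c : Conf V, qbr B a (b + c) = qbr B a b + qbr B a c) ∧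
  (∀ (k : ℂ) (a b : Conf V), qbr B (k • a) b = k • qbr B a b) ∧
  (∀ (k : ℂ) (a b : Conf V), qbr B a (k • b) = k • qbr B a b) ∧
  (∀ a b : Conf V, qbr B (Dop a) b = - lmul (qbr B a b)) ∧
  (∀ a b : Conf V, qbr B a (Dop b) = ldOp (qbr B a b)) ∧
  (∀ a b : Conf V, qbr B a b = - nsubst (qbr B b a)) ∧
  (∀ a b c : Conf V, ∀ p q : ℕ,
    qbr B a (qbr B b c q) p =
      (∑ n ∈ Finset.Icc q (p + q),
        (n.choose q : ℂ) • qbr B (qbr B a b (p + q - n)) c n)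
      + qbr B b (qbr B a c p) q)

/-- Generator values of the `λ`-bracket of the quadratic Lie conformal algebra
associated to a Gel'fand-Dorfman bialgebra `(V, mul, lie)`:
`[u λ v] = ∂(v∘u) + [v,u] + λ(u∘v + v∘u)`. -/
noncomputable def gdB (mul lie : V → V → V) (u v : V) : LP V :=
  Finsupp.single 0 (Finsupp.single 1 (mul v u) + Finsupp.single 0 (lie v u))
    + Finsupp.single 1 (Finsupp.single 0 (mul u v + mul v u))

section Nov
variable (mul : V → V → V)

lemma bilin_zero_left (hb : IsBilin mul) (y : V) : mul 0 y = 0 := by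
  have := hb.2.2.1 0 0 y; simpa using this

lemma bilin_zero_right (hb : IsBilin mul) (x : V) : mul x 0 = 0 := by
  have := hb.2.2.2 0 x 0; simpa using this

lemma bilin_neg_left (hb : IsBilin mul) (x y : V) : mul (-x) y = - mul x y := by
  have := hb.2.2.1 (-1) x y; simpa using this

lemma bilin_neg_right (hb : IsBilin mul) (x y : V) : mul x (-y) = - mul x y := by
  have := hb.2.2.2 (-1) x y; simpa using this

lemma anticomm_false (hN : IsNovikov mul) (hs : NovikovSimple mul)
    (hac : ∀ u v : V, mul u v + mul v u = 0) : False := by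
  obtain ⟨hb, hassoc, hrsym⟩ := hN
  have hneg : ∀ u v : V, mul u v = - mul v u := fun u v =>
    eq_neg_of_add_eq_zero_left (hac u v)
  have T1 : ∀ a b c : V, mul (mul a b) c = mul a (mul b c) := by
    intro a b c
    have h1 : mul (mul b a) c = mul (mul b c) a := hrsym b a c
    rw [hneg b a, bilin_neg_left mul hb, hneg (mul b c) a] at h1
    exact neg_injective h1
  have T0 : ∀ a b c : V, mul (mul a b) c = 0 := by
    intro a b c
    have h1 : mul (mul a b) c = mul (mul a c) b := hrsym a b c
    rw [T1 a c b, hneg c b, bilin_neg_right mul hb, ← T1 a b c] at h1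
    have h3 : (2 : ℂ) • mul (mul a b) c = 0 := by
      rw [two_smul]; nth_rewrite 2 [h1]; abel
    have := congrArg (fun x => ((2 : ℂ))⁻¹ • x) h3
    simpa [smul_smul] using this
  set Z : Submodule ℂ V :=
    { carrier := {x | ∀ c : V, mul x c = 0}
      add_mem' := by
        intro a b ha hb' c
        show mul (a + b) c = 0
        rw [hb.1 a b c, ha c, hb' c, add_zero]
      zero_mem' := fun c => bilin_zero_left mul hb c
      smul_mem' := by
        intro k x hx c
        show mul (k • x) c = 0
        rw [hb.2.2.1 k x c, hx c, smul_zero] } with hZ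
  have hZideal : IsNovikovIdeal mul Z := by
    intro a ha b
    refine ⟨fun c => T0 a b c, fun c => ?_⟩
    rw [hneg b a, bilin_neg_left mul hb, T0 a b c, neg_zero]
  obtain ⟨a, b, hab⟩ := hs.1
  rcases hs.2 Z hZideal with h | h
  · have : mul a b ∈ Z := fun c => T0 a b c
    rw [h] at this
    exact hab (by simpa using this)
  · have ha : a ∈ Z := h ▸ Submodule.mem_top
    exact hab (ha b)

lemma ann_eq_zero (hN : IsNovikov mul) (hs : NovikovSimple mul)
    (v : V) (hv : ∀ u : V, mul u v + mul v u = 0) : v = 0 := by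
  obtain ⟨hb, hassoc, hrsym⟩ := hN
  set A : Submodule ℂ V :=
    { carrier := {v | ∀ u : V, mul u v + mul v u = 0}
      add_mem' := by
        intro x y hx hy u
        show mul u (x + y) + mul (x + y) u = 0
        rw [hb.2.1 u x y, hb.1 x y u]
        calc mul u x + mul u y + (mul x u + mul y u)
            = (mul u x + mul x u) + (mul u y + mul y u) := by abel
          _ = 0 := by rw [hx u, hy u, add_zero]
      zero_mem' := by
        intro u
        show mul u 0 + mul 0 u = 0
        rw [bilin_zero_left mul hb, bilin_zero_right mul hb, add_zero]
      smul_mem' := by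
        intro k x hx u
        show mul u (k • x) + mul (k • x) u = 0
        rw [hb.2.2.2 k u x, hb.2.2.1 k x u, ← smul_add, hx u, smul_zero] } with hA
  have hAideal : IsNovikovIdeal mul A := by
    intro a ha b
    have ha' : ∀ u : V, mul u a + mul a u = 0 := ha
    have hnx : ∀ u : V, mul u a = - mul a u := fun u =>
      eq_neg_of_add_eq_zero_left (ha' u)
    have hnx' : ∀ u : V, mul a u = - mul u a := fun u =>
      eq_neg_of_add_eq_zero_right (ha' u)
    have key1 : ∀ u w : V, mul (mul a w) u = mul a (mul u w) := by
      intro u w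
      rw [hrsym a w u, hnx' u, bilin_neg_left mul hb, hrsym u a w, hnx (mul u w)]
      simp
    have key2 : ∀ u w : V, mul u (mul a w) = mul (mul u a) w := by
      intro u w
      have h := hassoc u a w
      rw [hnx' u, bilin_neg_left mul hb, hnx' (mul u w), hrsym u a w] at h
      have h6 : mul (mul u w) a - mul u (mul a w) = 0 := h.trans (by abel)
      rw [hrsym u a w]
      exact (sub_eq_zero.mp h6).symm
    have key3 : ∀ u w : V, mul a (mul u w) = mul (mul a u) w := by
      intro u w
      have h := hassoc a u w
      rw [key2 u w] at h
      have h6 : mul (mul a u) w - mul a (mul u w) = 0 := h.trans (by abel)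
      exact (sub_eq_zero.mp h6).symm
    have key4 : ∀ u w : V, mul a (mul u w) = mul a (mul w u) := by
      intro u w
      rw [key3 u w, hrsym a u w, ← key3 w u]
    constructor
    · -- mul a b ∈ A
      intro u
      show mul u (mul a b) + mul (mul a b) u = 0
      rw [key2 u b, key1 u b, hnx' (mul u b), hrsym u b a]
      abel
    · -- mul b a ∈ A
      intro u
      show mul u (mul b a) + mul (mul b a) u = 0
      have e1 : mul b (mul u a) = mul a (mul b u) := by
        rw [hnx u, bilin_neg_right mul hb, key2 b u, hrsym b a u, hnx (mul b u)]
        simp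
      have h := hassoc u b a
      rw [e1, hnx (mul u b), hnx (mul b u), key4 u b] at h
      have h9 : mul u (mul b a) = mul a (mul b u) := sub_right_injective h
      have t1 : mul (mul b a) u = - mul a (mul b u) := by
        rw [hrsym b a u, hnx (mul b u)]
      rw [h9, t1]
      abel
  rcases hs.2 A hAideal with h | h
  · have : v ∈ A := hv
    rw [h] at this
    simpa using this
  · exfalso
    apply anticomm_false mul ⟨hb, hassoc, hrsym⟩ hs
    intro u w
    have : w ∈ A := h ▸ Submodule.mem_top
    exact this u

end Nov

section LPlemmas
variable {V : Type} [AddCommGroup V] [Module ℂ V]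

lemma Dop_single (m : ℕ) (v : V) : Dop (Finsupp.single m v) = Finsupp.single (m + 1) v := by
  simp [Dop, Finsupp.mapDomain_single]

lemma Dop_zero : Dop (0 : Conf V) = 0 := by simp [Dop]

lemma Dop_iter_single (k m : ℕ) (v : V) :
    (Dop (V := V))^[k] (Finsupp.single m v) = Finsupp.single (m + k) v := by
  induction k with
  | zero => simp
  | succ n ih =>
      rw [Function.iterate_succ_apply', ih, Dop_single, Nat.add_assoc]

lemma lmul_apply_succ (P : LP V) (j : ℕ) : lmul P (j + 1) = P j := by
  simpa [lmul] using Finsupp.mapDomain_apply (add_left_injective 1) P j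

lemma lmul_apply_zero (P : LP V) : lmul P 0 = 0 := by
  have : (0 : ℕ) ∉ Set.range (fun n : ℕ => n + 1) := by
    rintro ⟨n, hn⟩; simp at hn
  exact Finsupp.mapDomain_notin_range _ _ this

lemma dmul_apply (P : LP V) (j : ℕ) : dmul P j = Dop (P j) := by
  simp [dmul, Finsupp.mapRange_apply]

lemma ldOp_apply_succ (P : LP V) (j : ℕ) :
    ldOp P (j + 1) = P j + Dop (P (j + 1)) := by
  simp [ldOp, Finsupp.add_apply, lmul_apply_succ, dmul_apply]

lemma ldOp_apply_zero (P : LP V) : ldOp P 0 = Dop (P 0) := by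
  simp [ldOp, Finsupp.add_apply, lmul_apply_zero, dmul_apply]

lemma ldOp_zero : ldOp (0 : LP V) = 0 := by
  simp [ldOp, lmul, dmul]

lemma ldOp_iter_zero (n : ℕ) : (ldOp (V := V))^[n] 0 = 0 := by
  induction n with
  | zero => simp
  | succ k ih => rw [Function.iterate_succ_apply', ih, ldOp_zero]

/-- top-coefficient behaviour of iterates of `λ + ∂`. -/
lemma ldOp_iter_top (Q : LP V) (t : ℕ) (hQ : ∀ j, t < j → Q j = 0) (n : ℕ) :
    (∀ j, t + n < j → (ldOp (V := V))^[n] Q j = 0) ∧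
      (ldOp (V := V))^[n] Q (t + n) = Q t := by
  induction n with
  | zero => exact ⟨by simpa using hQ, by simp⟩
  | succ k ih =>
      obtain ⟨h1, h2⟩ := ih
      constructor
      · intro j hj
        obtain ⟨j', rfl⟩ : ∃ j', j = j' + 1 := ⟨j - 1, by omega⟩
        rw [Function.iterate_succ_apply', ldOp_apply_succ,
          h1 j' (by omega), h1 (j' + 1) (by omega), Dop_zero, add_zero]
      · rw [Function.iterate_succ_apply']
        have : t + (k + 1) = (t + k) + 1 := by omega
        rw [this, ldOp_apply_succ, h2, h1 (t + k + 1) (by omega), Dop_zero, add_zero]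

/-- bottom-coefficient behaviour of iterates of `λ + ∂`. -/
lemma ldOp_iter_bot (Q : LP V) (n : ℕ) :
    (ldOp (V := V))^[n] Q 0 = (Dop (V := V))^[n] (Q 0) := by
  induction n with
  | zero => simp
  | succ k ih =>
      rw [Function.iterate_succ_apply', ldOp_apply_zero, ih]
      exact (Function.iterate_succ_apply' (Dop (V := V)) k (Q 0)).symm

section withmul
variable (mul : V → V → V)

lemma bz_left (hb : IsBilin mul) (y : V) : mul 0 y = 0 := by
  have := hb.2.2.1 0 0 y; simpa using this

lemma bz_right (hb : IsBilin mul) (x : V) : mul x 0 = 0 := by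
  have := hb.2.2.2 0 x 0; simpa using this

/-- abbreviation for the trivial Lie bracket -/
noncomputable def B0 (u v : V) : LP V := gdB mul (fun _ _ : V => (0 : V)) u v

lemma B0_eq (u v : V) :
    B0 mul u v = Finsupp.single 0 (Finsupp.single 1 (mul v u))
      + Finsupp.single 1 (Finsupp.single 0 (mul u v + mul v u)) := by
  simp [B0, gdB]

lemma B0_apply_zero (u v : V) : B0 mul u v 0 = Finsupp.single 1 (mul v u) := by
  rw [B0_eq]; simp [Finsupp.single_apply]

lemma B0_apply_one (u v : V) : B0 mul u v 1 = Finsupp.single 0 (mul u v + mul v u) := by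
  rw [B0_eq]; simp [Finsupp.single_apply]

lemma B0_apply_top (u v : V) : ∀ j, 1 < j → B0 mul u v j = 0 := by
  intro j hj
  rw [B0_eq]
  rw [Finsupp.add_apply, Finsupp.single_apply, Finsupp.single_apply]
  rw [if_neg (by omega), if_neg (by omega), add_zero]

lemma B0_left_zero (hb : IsBilin mul) (v : V) : B0 mul 0 v = 0 := by
  rw [B0_eq, bz_left mul hb, bz_right mul hb]
  simp

lemma B0_right_zero (hb : IsBilin mul) (u : V) : B0 mul u 0 = 0 := by
  rw [B0_eq, bz_left mul hb, bz_right mul hb]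
  simp

/-- the bracket of a generator `u ∈ V` with an arbitrary element. -/
lemma qbr_u (hb : IsBilin mul) (u : V) (x : Conf V) :
    qbr (gdB mul (fun _ _ : V => (0 : V))) (Finsupp.single 0 u) x
      = Finsupp.sum x fun n xn => (ldOp (V := V))^[n] (B0 mul u xn) := by
  rw [qbr, Finsupp.sum_single_index]
  · simp only [pow_zero, one_smul, Function.iterate_zero, id]
    rfl
  · rw [Finsupp.sum]
    apply Finset.sum_eq_zero
    intro n hn
    have : gdB mul (fun _ _ : V => (0 : V)) 0 (x n) = 0 := B0_left_zero mul hb (x n)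
    rw [this, ldOp_iter_zero]
    simp

lemma qbr_u_single (hb : IsBilin mul) (u v : V) (k : ℕ) :
    qbr (gdB mul (fun _ _ : V => (0 : V))) (Finsupp.single 0 u) (Finsupp.single k v)
      = (ldOp (V := V))^[k] (B0 mul u v) := by
  rw [qbr_u mul hb, Finsupp.sum_single_index]
  show (ldOp (V := V))^[k] (gdB mul (fun _ _ : V => (0 : V)) u 0) = 0
  have : gdB mul (fun _ _ : V => (0 : V)) u 0 = 0 := B0_right_zero mul hb u
  rw [this, ldOp_iter_zero]

end withmul
end LPlemmas

end QLCA

open QLCA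


/-- let `(V,∘)` be a simple Novikov algebra and `R = ℂ[∂]V` the
quadratic Lie conformal algebra corresponding to `(V,∘)` with the trivial Lie
bracket. Then every nonzero ideal `I` of `R` contains `p(∂)∂v` for every
polynomial `p ∈ ℂ[∂]` and every `v ∈ V`. -/
theorem stmt_6 {V : Type} [AddCommGroup V] [Module ℂ V] (mul : V → V → V)
    (hN : IsNovikov mul) (hs : NovikovSimple mul) :
    ∀ I : Submodule ℂ (Conf V),
      IsConfIdeal (gdB mul (fun _ _ : V => (0 : V))) I → I ≠ ⊥ →
        ∀ (p : Polynomial ℂ) (v : V),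
          (p.sum fun k c => Finsupp.single (k + 1) (c • v)) ∈ I := by
  intro I hI hne p v
  have hb : IsBilin mul := hN.1
  have hD := hI.1
  have hBr := hI.2
  -- `∂`-closure upgrades membership of `w` (in degree 0) to all degrees
  have hsingle : ∀ w : V, Finsupp.single 0 w ∈ I → ∀ k : ℕ, Finsupp.single k w ∈ I := by
    intro w hw k
    induction k with
    | zero => exact hw
    | succ n ih =>
        have := hD _ ih
        rwa [Dop_single] at this
  -- the candidate Novikov ideal
  set W : Submodule ℂ V :=
    { carrier := {a | ∀ m : ℕ, Finsupp.single (m + 1) a ∈ I}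
      add_mem' := by
        intro x y hx hy m
        show Finsupp.single (m + 1) (x + y) ∈ I
        rw [Finsupp.single_add]
        exact I.add_mem (hx m) (hy m)
      zero_mem' := by
        intro m
        show Finsupp.single (m + 1) (0 : V) ∈ I
        rw [Finsupp.single_zero]
        exact I.zero_mem
      smul_mem' := by
        intro c x hx m
        show Finsupp.single (m + 1) (c • x) ∈ I
        rw [← Finsupp.smul_single]
        exact I.smul_mem c (hx m) } with hW
  have hWmem : ∀ a : V, a ∈ W ↔ ∀ m : ℕ, Finsupp.single (m + 1) a ∈ I := fun a => Iff.rfl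
  -- key computations for the ideal property
  have hWid : IsNovikovIdeal mul W := by
    intro a ha b
    have ha' : ∀ m : ℕ, Finsupp.single (m + 1) a ∈ I := ha
    -- the coefficient of λ² in [b λ ∂a]
    have key_top : Finsupp.single 0 (mul b a + mul a b) ∈ I := by
      have h := hBr (Finsupp.single 0 b) (Finsupp.single 1 a) (ha' 0) 2
      rw [qbr_u_single mul hb] at h
      have e := (ldOp_iter_top (B0 mul b a) 1 (B0_apply_top mul b a) 1).2
      rw [B0_apply_one] at e
      show Finsupp.single 0 (mul b a + mul a b) ∈ I
      rwa [show (2 : ℕ) = 1 + 1 from rfl, e] at h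
    -- the coefficient of λ¹ in [b λ ∂a]
    have key_mid : Finsupp.single 1 (mul a b) ∈ I := by
      have h := hBr (Finsupp.single 0 b) (Finsupp.single 1 a) (ha' 0) 1
      rw [qbr_u_single mul hb] at h
      have e : (ldOp (V := V))^[1] (B0 mul b a) 1
          = Finsupp.single 1 (mul a b) + Finsupp.single 1 (mul b a + mul a b) := by
        rw [Function.iterate_one, show (1 : ℕ) = 0 + 1 from rfl, ldOp_apply_succ,
          B0_apply_zero, B0_apply_one, Dop_single]
      rw [e] at h
      have h2 := I.sub_mem h (hsingle _ key_top 1)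
      have e2 : Finsupp.single 1 (mul a b) + Finsupp.single 1 (mul b a + mul a b)
          - Finsupp.single 1 (mul b a + mul a b) = Finsupp.single 1 (mul a b) := by
        abel
      rwa [e2] at h2
    -- the coefficient of λ⁰ in [b λ ∂^(m+1) a]
    have key_high : ∀ m : ℕ, Finsupp.single (m + 2) (mul a b) ∈ I := by
      intro m
      have h := hBr (Finsupp.single 0 b) (Finsupp.single (m + 1) a) (ha' m) 0
      rw [qbr_u_single mul hb] at h
      have e : (ldOp (V := V))^[m + 1] (B0 mul b a) 0
          = Finsupp.single (m + 2) (mul a b) := by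
        rw [ldOp_iter_bot, B0_apply_zero, Dop_iter_single,
          show 1 + (m + 1) = m + 2 by omega]
      rwa [e] at h
    constructor
    · -- mul a b ∈ W
      intro m
      match m with
      | 0 => exact key_mid
      | Nat.succ k => exact key_high k
    · -- mul b a ∈ W
      intro m
      have e : Finsupp.single (m + 1) (mul b a)
          = Finsupp.single (m + 1) (mul b a + mul a b)
            - Finsupp.single (m + 1) (mul a b) := by
        rw [Finsupp.single_add]; abel
      rw [e]
      refine I.sub_mem (hsingle _ key_top (m + 1)) ?_
      match m with
      | 0 => exact key_mid
      | Nat.succ k => exact key_high k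
  -- W is nonzero
  obtain ⟨x, hxI, hx0⟩ := (Submodule.ne_bot_iff I).mp hne
  have hsupp : x.support.Nonempty := Finsupp.support_nonempty_iff.mpr hx0
  set d : ℕ := x.support.max' hsupp with hd
  have hxd : x d ≠ 0 := Finsupp.mem_support_iff.mp (x.support.max'_mem hsupp)
  have hu : ∃ u : V, mul u (x d) + mul (x d) u ≠ 0 := by
    by_contra hcon
    push_neg at hcon
    exact hxd (ann_eq_zero mul hN hs (x d) hcon)
  obtain ⟨u, hu⟩ := hu
  have hcoef : Finsupp.single 0 (mul u (x d) + mul (x d) u) ∈ I := by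
    have h := hBr (Finsupp.single 0 u) x hxI (d + 1)
    rw [qbr_u mul hb] at h
    rw [Finsupp.sum_apply, Finsupp.sum] at h
    rw [Finset.sum_eq_single_of_mem d (x.support.max'_mem hsupp)] at h
    · have e := (ldOp_iter_top (B0 mul u (x d)) 1 (B0_apply_top mul u (x d)) d).2
      rw [B0_apply_one] at e
      rwa [show d + 1 = 1 + d by omega, e] at h
    · intro n hn hnd
      have hnle : n < d := lt_of_le_of_ne (x.support.le_max' n hn) hnd
      exact (ldOp_iter_top (B0 mul u (x n)) 1 (B0_apply_top mul u (x n)) n).1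
        (d + 1) (by omega)
  have hwW : (mul u (x d) + mul (x d) u) ∈ W := fun m => hsingle _ hcoef (m + 1)
  have hWne : W ≠ ⊥ := by
    intro hbot
    rw [hbot] at hwW
    exact hu (by simpa using hwW)
  have hWtop : W = ⊤ := (hs.2 W hWid).resolve_left hWne
  have hv : v ∈ W := hWtop ▸ Submodule.mem_top
  rw [Polynomial.sum]
  apply Submodule.sum_mem
  intro k _
  have e : Finsupp.single (k + 1) (p.coeff k • v)
      = p.coeff k • Finsupp.single (k + 1) v := (Finsupp.smul_single _ _ _).symm
  rw [e]
  exact I.smul_mem _ (hv k)
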